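/- Let P be a poset regarded as a category, let F : C ⥤ P be a functor, let W_P be the class of morphisms f of C such that F.map f is an isomorphism, and let L : C ⥤ D be a localization of C at W_P. Then D is idempotent complete. -/

import Mathlib

/-!
Every endomorphism of a preorder is invertible, so a functor to a preorder that reflects
isomorphisms forces every idempotent to be an isomorphism, hence an identity; such a category
is trivially idempotent complete. The functor `D ⥤ P` induced by `F` reflects isomorphisms: the
morphisms at which it does form a class closed under composition (in a preorder, `f ≫ g`
invertible forces `f` and `g` invertible) that contains the image of `L` and the formal inverses,
so it is everything.
-/

open CategoryTheory

namespace CategoryTheory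

variable {C D P : Type*} [Category C] [Category D] [Preorder P]

lemma Preorder.isIso_iff_le {a b : P} (f : a ⟶ b) : IsIso f ↔ b ≤ a :=
  ⟨fun _ => leOfHom (inv f),
    fun h => ⟨homOfLE h, Subsingleton.elim _ _, Subsingleton.elim _ _⟩⟩

lemma Preorder.isIso_left_and_right_of_isIso_comp {a b c : P} (f : a ⟶ b) (g : b ⟶ c)
    (hfg : IsIso (f ≫ g)) : IsIso f ∧ IsIso g := by
  simp only [isIso_iff_le] at hfg ⊢
  exact ⟨(leOfHom g).trans hfg, hfg.trans (leOfHom f)⟩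

lemma Preorder.isIso_of_endo {a : P} (f : a ⟶ a) : IsIso f :=
  (isIso_iff_le f).2 le_rfl

lemma isIdempotentComplete_of_forall_isIso
    (h : ∀ (X : D) (p : X ⟶ X), p ≫ p = p → IsIso p) : IsIdempotentComplete D := by
  refine ⟨fun X p hp => ⟨X, 𝟙 X, 𝟙 X, Category.id_comp _, ?_⟩⟩
  have := h X p hp
  rw [Category.comp_id, ← cancel_epi p, hp, Category.comp_id]

lemma isIdempotentComplete_of_reflectsIsomorphisms_to_preorder (G : D ⥤ P)
    [G.ReflectsIsomorphisms] : IsIdempotentComplete D :=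
  isIdempotentComplete_of_forall_isIso fun _ p _ =>
    have := Preorder.isIso_of_endo (G.map p)
    isIso_of_reflects_iso p G

namespace Functor

variable {E : Type*} [Category E]

def isoReflectingMorphisms (G : D ⥤ E) : MorphismProperty D :=
  fun _ _ f => IsIso (G.map f) → IsIso f

lemma reflectsIsomorphisms_of_isoReflectingMorphisms_eq_top (G : D ⥤ E)
    (hG : G.isoReflectingMorphisms = ⊤) : G.ReflectsIsomorphisms where
  reflects f hf := (hG.symm ▸ trivial : G.isoReflectingMorphisms f) hf

instance (G : D ⥤ E) : G.isoReflectingMorphisms.RespectsIso :=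
  MorphismProperty.RespectsIso.mk _
    (fun e f hf hef => by
      rw [G.map_comp] at hef
      have := hf (IsIso.of_isIso_comp_left (G.map e.hom) (G.map f))
      infer_instance)
    (fun e f hf hfe => by
      rw [G.map_comp] at hfe
      have := hf (IsIso.of_isIso_comp_right (G.map f) (G.map e.hom))
      infer_instance)

instance (G : D ⥤ P) : G.isoReflectingMorphisms.IsMultiplicative where
  id_mem _ _ := inferInstance
  comp_mem f g hf hg hfg := by
    rw [G.map_comp] at hfg
    obtain ⟨hGf, hGg⟩ := Preorder.isIso_left_and_right_of_isIso_comp _ _ hfg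
    have := hf hGf
    have := hg hGg
    infer_instance

end Functor

lemma Localization.reflectsIsomorphisms_of_preorder (F : C ⥤ P) (L : C ⥤ D)
    [L.IsLocalization (fun _ _ f => IsIso (F.map f))] (G : D ⥤ P) (e : L ⋙ G ≅ F) :
    G.ReflectsIsomorphisms :=
  G.reflectsIsomorphisms_of_isoReflectingMorphisms_eq_top <|
    Localization.morphismProperty_eq_top L (fun _ _ f => IsIso (F.map f)) _
      (fun _ _ f hf =>
        Localization.inverts L (fun _ _ f => IsIso (F.map f)) f ((NatIso.isIso_map_iff e f).1 hf))
      (fun _ _ _ _ _ => inferInstance)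

end CategoryTheory

/-- Let `F : C ⥤ P` be a functor to a poset, `W_P` the class of morphisms inverted by `F`,
and `L : C ⥤ D` a localization of `C` at `W_P`. Then `D` is idempotent complete. -/
theorem idempotentComplete_of_localization_over_poset
    {C : Type*} [Category C] {D : Type*} [Category D]
    {P : Type*} [PartialOrder P]
    (F : C ⥤ P) (L : C ⥤ D)
    (hL : L.IsLocalization (fun _ _ f => IsIso (F.map f))) :
    IsIdempotentComplete D := by
  have hF : MorphismProperty.IsInvertedBy (fun _ _ f => IsIso (F.map f)) F := fun _ _ _ hf => hf
  have := Localization.reflectsIsomorphisms_of_preorder F L _ (Localization.fac F hF L)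
  exact isIdempotentComplete_of_reflectsIsomorphisms_to_preorder (Localization.lift F hF L)
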